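/- arXiv:2411.06863 — 3 statements merged into one kernel-verified Lean document; each statement's English description precedes it below -/
import Mathlib

section
/- For any three unit vectors v₁, v₂, v₃ in a complex inner product space, the Bures angles θ(u,w) := arccos |⟨u,w⟩| satisfy the triangle inequality θ(v₁,v₂) + θ(v₂,v₃) ≥ θ(v₁,v₃). -/
open scoped InnerProductSpace

open Real

/-- Key inequality: `ab - √(1-a²)√(1-b²) ≤ c` for overlaps of unit vectors. -/
lemma bures_key
    {H : Type*} [NormedAddCommGroup H] [InnerProductSpace ℂ H]
    (v₁ v₂ v₃ : H) (h₁ : ‖v₁‖ = 1) (h₂ : ‖v₂‖ = 1) (h₃ : ‖v₃‖ = 1) :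
    ‖⟪v₁, v₂⟫_ℂ‖ * ‖⟪v₂, v₃⟫_ℂ‖ -
      Real.sqrt (1 - ‖⟪v₁, v₂⟫_ℂ‖ ^ 2) * Real.sqrt (1 - ‖⟪v₂, v₃⟫_ℂ‖ ^ 2) ≤
      ‖⟪v₁, v₃⟫_ℂ‖ := by
  set w₁ : H := v₁ - ⟪v₂, v₁⟫_ℂ • v₂ with hw₁
  set w₃ : H := v₃ - ⟪v₂, v₃⟫_ℂ • v₂ with hw₃
  have hvv₂ : ⟪v₂, v₂⟫_ℂ = 1 := by
    simp [inner_self_eq_norm_sq_to_K, h₂]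
  have hconj : ⟪v₂, v₁⟫_ℂ = starRingEnd ℂ ⟪v₁, v₂⟫_ℂ := by
    rw [inner_conj_symm]
  have hsplit : ⟪w₁, w₃⟫_ℂ = ⟪v₁, v₃⟫_ℂ - ⟪v₁, v₂⟫_ℂ * ⟪v₂, v₃⟫_ℂ := by
    rw [hw₁, hw₃]
    simp only [inner_sub_left, inner_sub_right, inner_smul_left, inner_smul_right,
      hvv₂, hconj]
    ring
  have hn : ∀ u : H, ‖u‖ = 1 → ‖u - ⟪v₂, u⟫_ℂ • v₂‖ ^ 2 = 1 - ‖⟪u, v₂⟫_ℂ‖ ^ 2 := by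
    intro u hu
    have h := norm_sub_sq (𝕜 := ℂ) u (⟪v₂, u⟫_ℂ • v₂)
    rw [inner_smul_right, norm_smul, hu, h₂] at h
    have hre : RCLike.re (⟪v₂, u⟫_ℂ * ⟪u, v₂⟫_ℂ) = ‖⟪u, v₂⟫_ℂ‖ ^ 2 := by
      have habs : ‖⟪v₂, u⟫_ℂ‖ = ‖⟪u, v₂⟫_ℂ‖ := by
        rw [← inner_conj_symm u v₂, Complex.norm_conj]
      rw [← inner_conj_symm u v₂, RCLike.mul_conj]
      simp [← Complex.ofReal_pow, Complex.norm_conj, habs]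
    rw [hre] at h
    have : ‖⟪v₂, u⟫_ℂ‖ = ‖⟪u, v₂⟫_ℂ‖ := by
      rw [← inner_conj_symm u v₂, RCLike.norm_conj]
    rw [this] at h
    rw [h]; ring
  have hn₁ : ‖w₁‖ ^ 2 = 1 - ‖⟪v₁, v₂⟫_ℂ‖ ^ 2 := hn v₁ h₁
  have hn₃ : ‖w₃‖ ^ 2 = 1 - ‖⟪v₂, v₃⟫_ℂ‖ ^ 2 := by
    rw [show ‖⟪v₂, v₃⟫_ℂ‖ = ‖⟪v₃, v₂⟫_ℂ‖ by
      rw [← inner_conj_symm v₃ v₂, RCLike.norm_conj]]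
    exact hn v₃ h₃
  have hcs : ‖⟪w₁, w₃⟫_ℂ‖ ≤ Real.sqrt (1 - ‖⟪v₁, v₂⟫_ℂ‖ ^ 2) *
      Real.sqrt (1 - ‖⟪v₂, v₃⟫_ℂ‖ ^ 2) := by
    calc ‖⟪w₁, w₃⟫_ℂ‖ ≤ ‖w₁‖ * ‖w₃‖ := norm_inner_le_norm _ _
    _ = Real.sqrt (1 - ‖⟪v₁, v₂⟫_ℂ‖ ^ 2) * Real.sqrt (1 - ‖⟪v₂, v₃⟫_ℂ‖ ^ 2) := by
        rw [← hn₁, ← hn₃, Real.sqrt_sq (norm_nonneg _), Real.sqrt_sq (norm_nonneg _)]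
  have htri : ‖⟪v₁, v₂⟫_ℂ‖ * ‖⟪v₂, v₃⟫_ℂ‖ ≤ ‖⟪v₁, v₃⟫_ℂ‖ + ‖⟪w₁, w₃⟫_ℂ‖ := by
    calc ‖⟪v₁, v₂⟫_ℂ‖ * ‖⟪v₂, v₃⟫_ℂ‖ = ‖⟪v₁, v₂⟫_ℂ * ⟪v₂, v₃⟫_ℂ‖ := (norm_mul _ _).symm
    _ = ‖⟪v₁, v₃⟫_ℂ - ⟪w₁, w₃⟫_ℂ‖ := by rw [hsplit]; ring_nf
    _ ≤ ‖⟪v₁, v₃⟫_ℂ‖ + ‖⟪w₁, w₃⟫_ℂ‖ := norm_sub_le _ _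
  linarith

/-- Triangle inequality for Bures angles `θ(u,w) = arccos |⟨u,w⟩|` between
unit vectors in a complex inner product space. -/
theorem bures_angle_triangle_inequality
    {H : Type*} [NormedAddCommGroup H] [InnerProductSpace ℂ H]
    (v₁ v₂ v₃ : H) (h₁ : ‖v₁‖ = 1) (h₂ : ‖v₂‖ = 1) (h₃ : ‖v₃‖ = 1) :
    Real.arccos ‖⟪v₁, v₂⟫_ℂ‖ + Real.arccos ‖⟪v₂, v₃⟫_ℂ‖ ≥
      Real.arccos ‖⟪v₁, v₃⟫_ℂ‖ := by
  set a := ‖⟪v₁, v₂⟫_ℂ‖ with ha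
  set b := ‖⟪v₂, v₃⟫_ℂ‖ with hb
  set c := ‖⟪v₁, v₃⟫_ℂ‖ with hc
  have ha0 : 0 ≤ a := norm_nonneg _
  have hb0 : 0 ≤ b := norm_nonneg _
  have hc0 : 0 ≤ c := norm_nonneg _
  have ha1 : a ≤ 1 := by
    have := norm_inner_le_norm (𝕜 := ℂ) v₁ v₂; rw [h₁, h₂] at this; simpa using this
  have hb1 : b ≤ 1 := by
    have := norm_inner_le_norm (𝕜 := ℂ) v₂ v₃; rw [h₂, h₃] at this; simpa using this
  have hc1 : c ≤ 1 := by
    have := norm_inner_le_norm (𝕜 := ℂ) v₁ v₃; rw [h₁, h₃] at this; simpa using this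
  have key : a * b - Real.sqrt (1 - a ^ 2) * Real.sqrt (1 - b ^ 2) ≤ c :=
    bures_key v₁ v₂ v₃ h₁ h₂ h₃
  -- trig part
  by_cases hAB : Real.arccos a + Real.arccos b ≤ π
  · have hcos : Real.cos (Real.arccos a + Real.arccos b) ≤ c := by
      rw [Real.cos_add, Real.cos_arccos (by linarith) ha1,
        Real.cos_arccos (by linarith) hb1, Real.sin_arccos, Real.sin_arccos]
      exact key
    have h0AB : 0 ≤ Real.arccos a + Real.arccos b := by
      have := Real.arccos_nonneg a
      have := Real.arccos_nonneg b
      linarith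
    have : Real.arccos c ≤ Real.arccos (Real.cos (Real.arccos a + Real.arccos b)) := by
      rw [Real.arccos_eq_pi_div_two_sub_arcsin, Real.arccos_eq_pi_div_two_sub_arcsin]
      have := Real.monotone_arcsin hcos
      linarith
    rwa [Real.arccos_cos h0AB hAB] at this
  · push_neg at hAB
    have : Real.arccos c ≤ π := Real.arccos_le_pi c
    linarith
end

section
/- (Forward inclusion of sphere expansion) If pure states x, y, c satisfy d(c,y) ≤ r and d(y,x) ≤ ε for trace distance d, then d(c,x) ≤ r√(1−ε²) + ε√(1−r²), provided arcsin r + arcsin ε ≤ π/2. -/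
open scoped InnerProductSpace

lemma perp_norm_sq {n : ℕ} (y x : EuclideanSpace ℂ (Fin n)) (hy : ‖y‖ = 1) (hx : ‖x‖ = 1) :
    ‖x - ⟪y, x⟫_ℂ • y‖ ^ 2 = 1 - ‖⟪y, x⟫_ℂ‖ ^ 2 := by
  have h := @norm_sub_sq ℂ _ _ _ _ x (⟪y, x⟫_ℂ • y)
  rw [inner_smul_right] at h
  simp only [hx, hy, norm_smul, Complex.mul_conj'] at h
  have h2 : ⟪y, x⟫_ℂ * ⟪x, y⟫_ℂ = (‖⟪y, x⟫_ℂ‖ : ℂ) ^ 2 := by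
    rw [← inner_conj_symm x y, Complex.mul_conj']
  rw [h2, ← Complex.ofReal_pow] at h
  simp only [mul_one, one_pow, Complex.ofReal_re, RCLike.ofReal_re, RCLike.re_to_complex, Complex.ofReal_re] at h
  rw [h]; ring

lemma inner_decomp {n : ℕ} (c y x : EuclideanSpace ℂ (Fin n)) (hy : ‖y‖ = 1) :
    ⟪c - ⟪y, c⟫_ℂ • y, x - ⟪y, x⟫_ℂ • y⟫_ℂ = ⟪c, x⟫_ℂ - ⟪c, y⟫_ℂ * ⟪y, x⟫_ℂ := by
  have hyy : ⟪y, y⟫_ℂ = 1 := by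
    rw [@inner_self_eq_norm_sq_to_K ℂ, hy]; norm_num
  rw [inner_sub_left, inner_sub_right, inner_sub_right, inner_smul_left, inner_smul_right,
    inner_smul_left, inner_smul_right, hyy, ← inner_conj_symm y c]
  ring

lemma inner_key {n : ℕ} (c y x : EuclideanSpace ℂ (Fin n))
    (hc : ‖c‖ = 1) (hy : ‖y‖ = 1) (hx : ‖x‖ = 1) :
    ‖⟪c, y⟫_ℂ‖ * ‖⟪y, x⟫_ℂ‖ - Real.sqrt (1 - ‖⟪c, y⟫_ℂ‖ ^ 2) * Real.sqrt (1 - ‖⟪y, x⟫_ℂ‖ ^ 2)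
      ≤ ‖⟪c, x⟫_ℂ‖ := by
  have hd := inner_decomp c y x hy
  have hcs := norm_inner_le_norm (𝕜 := ℂ) (c - ⟪y, c⟫_ℂ • y) (x - ⟪y, x⟫_ℂ • y)
  have hnc : ‖c - ⟪y, c⟫_ℂ • y‖ = Real.sqrt (1 - ‖⟪c, y⟫_ℂ‖ ^ 2) := by
    have := perp_norm_sq y c hy hc
    rw [norm_inner_symm] at this
    rw [← this, Real.sqrt_sq (norm_nonneg _)]
  have hnx : ‖x - ⟪y, x⟫_ℂ • y‖ = Real.sqrt (1 - ‖⟪y, x⟫_ℂ‖ ^ 2) := by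
    have := perp_norm_sq y x hy hx
    rw [← this, Real.sqrt_sq (norm_nonneg _)]
  rw [hd, hnc, hnx] at hcs
  have htri : ‖⟪c, y⟫_ℂ * ⟪y, x⟫_ℂ‖ - ‖⟪c, x⟫_ℂ‖ ≤ ‖⟪c, x⟫_ℂ - ⟪c, y⟫_ℂ * ⟪y, x⟫_ℂ‖ := by
    have := norm_sub_norm_le (⟪c, y⟫_ℂ * ⟪y, x⟫_ℂ) (⟪c, x⟫_ℂ)
    rw [norm_sub_rev] at this
    linarith
  rw [norm_mul] at htri
  linarith


lemma arith_key (a b t r ε : ℝ)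
    (ha0 : 0 ≤ a) (hb0 : 0 ≤ b) (ht0 : 0 ≤ t)
    (ha1 : a ≤ 1) (hb1 : b ≤ 1) (ht1 : t ≤ 1)
    (hr0 : 0 ≤ r) (hr1 : r ≤ 1) (hε0 : 0 ≤ ε) (hε1 : ε ≤ 1)
    (hrB : r ≤ Real.sqrt (1 - ε ^ 2))
    (h₁ : Real.sqrt (1 - a ^ 2) ≤ r) (h₂ : Real.sqrt (1 - b ^ 2) ≤ ε)
    (hkey : a * b - Real.sqrt (1 - a ^ 2) * Real.sqrt (1 - b ^ 2) ≤ t) :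
    Real.sqrt (1 - t ^ 2) ≤ r * Real.sqrt (1 - ε ^ 2) + ε * Real.sqrt (1 - r ^ 2) := by
  set A := Real.sqrt (1 - r ^ 2) with hA
  set B := Real.sqrt (1 - ε ^ 2) with hB
  have hA0 : 0 ≤ A := Real.sqrt_nonneg _
  have hB0 : 0 ≤ B := Real.sqrt_nonneg _
  have hA2 : A ^ 2 = 1 - r ^ 2 := Real.sq_sqrt (by nlinarith)
  have hB2 : B ^ 2 = 1 - ε ^ 2 := Real.sq_sqrt (by nlinarith)
  have h1' : 1 - a ^ 2 ≤ r ^ 2 := by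
    have hs := Real.sq_sqrt (by nlinarith : (0:ℝ) ≤ 1 - a ^ 2)
    nlinarith [Real.sqrt_nonneg (1 - a ^ 2)]
  have h2' : 1 - b ^ 2 ≤ ε ^ 2 := by
    have hs := Real.sq_sqrt (by nlinarith : (0:ℝ) ≤ 1 - b ^ 2)
    nlinarith [Real.sqrt_nonneg (1 - b ^ 2)]
  have hr2 : r ^ 2 ≤ 1 - ε ^ 2 := by nlinarith
  have hεA : ε ≤ A := by
    rw [hA]
    calc ε = Real.sqrt (ε ^ 2) := (Real.sqrt_sq hε0).symm
    _ ≤ Real.sqrt (1 - r ^ 2) := Real.sqrt_le_sqrt (by linarith)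
  have hreAB : r * ε ≤ A * B := by
    calc r * ε ≤ B * A := mul_le_mul hrB hεA hε0 hB0
    _ = A * B := mul_comm _ _
  have haA : A ≤ a := by
    rw [hA]
    calc Real.sqrt (1 - r ^ 2) ≤ Real.sqrt (a ^ 2) := Real.sqrt_le_sqrt (by linarith)
    _ = a := Real.sqrt_sq ha0
  have hbB : B ≤ b := by
    rw [hB]
    calc Real.sqrt (1 - ε ^ 2) ≤ Real.sqrt (b ^ 2) := Real.sqrt_le_sqrt (by linarith)
    _ = b := Real.sqrt_sq hb0
  have htC : A * B - r * ε ≤ t := by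
    have h3 : Real.sqrt (1 - a ^ 2) * Real.sqrt (1 - b ^ 2) ≤ r * ε :=
      mul_le_mul h₁ h₂ (Real.sqrt_nonneg _) hr0
    have h4 : A * B ≤ a * b := mul_le_mul haA hbB hB0 ha0
    linarith
  have hC0 : 0 ≤ A * B - r * ε := by linarith
  have hid : (A * B - r * ε) ^ 2 + (r * B + ε * A) ^ 2 = 1 := by
    linear_combination (B ^ 2 + ε ^ 2) * hA2 + hB2
  have h5 : (A * B - r * ε) ^ 2 ≤ t ^ 2 := pow_le_pow_left₀ hC0 htC 2
  have hfin : 1 - t ^ 2 ≤ (r * B + ε * A) ^ 2 := by linarith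
  calc Real.sqrt (1 - t ^ 2) ≤ Real.sqrt ((r * B + ε * A) ^ 2) := Real.sqrt_le_sqrt hfin
  _ = r * B + ε * A := Real.sqrt_sq (by positivity)


/-- Trace distance between (unit-vector representatives of) pure states. -/
noncomputable def traceDist {n : ℕ} (u v : EuclideanSpace ℂ (Fin n)) : ℝ :=
  Real.sqrt (1 - ‖⟪u, v⟫_ℂ‖ ^ 2)

/-- Forward inclusion of sphere expansion: if pure states `x, y, c` satisfy
`d(c,y) ≤ r` and `d(y,x) ≤ ε` in trace distance, then
`d(c,x) ≤ r√(1-ε²) + ε√(1-r²)`, provided `arcsin r + arcsin ε ≤ π/2`. -/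
theorem sphere_expansion_forward
    {n : ℕ} (c y x : EuclideanSpace ℂ (Fin n))
    (hc : ‖c‖ = 1) (hy : ‖y‖ = 1) (hx : ‖x‖ = 1)
    (r ε : ℝ) (hr0 : 0 ≤ r) (hr1 : r ≤ 1) (hε0 : 0 ≤ ε) (hε1 : ε ≤ 1)
    (hangle : Real.arcsin r + Real.arcsin ε ≤ Real.pi / 2)
    (h₁ : traceDist c y ≤ r) (h₂ : traceDist y x ≤ ε) :
    traceDist c x ≤ r * Real.sqrt (1 - ε ^ 2) + ε * Real.sqrt (1 - r ^ 2) := by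
  have hrB : r ≤ Real.sqrt (1 - ε ^ 2) := by
    have h1 : Real.arcsin r ≤ Real.pi / 2 - Real.arcsin ε := by linarith
    have h2 : Real.sin (Real.arcsin r) ≤ Real.sin (Real.pi / 2 - Real.arcsin ε) := by
      apply Real.strictMonoOn_sin.monotoneOn _ _ h1
      · exact ⟨Real.neg_pi_div_two_le_arcsin r, Real.arcsin_le_pi_div_two r⟩
      · constructor
        · have := Real.arcsin_le_pi_div_two ε; have := Real.pi_pos; linarith
        · have : 0 ≤ Real.arcsin ε := Real.arcsin_nonneg.mpr hε0; linarith
    rwa [Real.sin_arcsin (by linarith) hr1, Real.sin_pi_div_two_sub, Real.cos_arcsin] at h2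
  have ha1 : ‖⟪c, y⟫_ℂ‖ ≤ 1 := by
    have := norm_inner_le_norm (𝕜 := ℂ) c y; rw [hc, hy] at this; simpa using this
  have hb1 : ‖⟪y, x⟫_ℂ‖ ≤ 1 := by
    have := norm_inner_le_norm (𝕜 := ℂ) y x; rw [hy, hx] at this; simpa using this
  have ht1 : ‖⟪c, x⟫_ℂ‖ ≤ 1 := by
    have := norm_inner_le_norm (𝕜 := ℂ) c x; rw [hc, hx] at this; simpa using this
  exact arith_key ‖⟪c, y⟫_ℂ‖ ‖⟪y, x⟫_ℂ‖ ‖⟪c, x⟫_ℂ‖ r ε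
    (norm_nonneg _) (norm_nonneg _) (norm_nonneg _) ha1 hb1 ht1
    hr0 hr1 hε0 hε1 hrB h₁ h₂ (inner_key c y x hc hy hx)
end

section
/- (Reverse inclusion of sphere expansion) Given pure states c and x with trace distance d(c,x) ≤ r√(1−ε²) + ε√(1−r²) where arcsin r + arcsin ε ≤ π/2, there exists a pure state y with d(c,y) ≤ r and d(y,x) ≤ ε. -/
open scoped InnerProductSpace

lemma sphere_key (r ε s t : ℝ) (hr0 : 0 ≤ r) (hr1 : r ≤ 1) (hε0 : 0 ≤ ε) (hε1 : ε ≤ 1)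
    (ht0 : 0 ≤ t) (hst : s ^ 2 + t ^ 2 = 1) (hrs : r ≤ s)
    (hs : s ≤ r * Real.sqrt (1 - ε ^ 2) + ε * Real.sqrt (1 - r ^ 2)) :
    Real.sqrt (1 - ε ^ 2) ≤ t * Real.sqrt (1 - r ^ 2) + r * s := by
  set E := Real.sqrt (1 - ε ^ 2) with hEdef
  set R := Real.sqrt (1 - r ^ 2) with hRdef
  have hE2 : E ^ 2 = 1 - ε ^ 2 := Real.sq_sqrt (by nlinarith)
  have hR2 : R ^ 2 = 1 - r ^ 2 := Real.sq_sqrt (by nlinarith)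
  have hE0 : 0 ≤ E := Real.sqrt_nonneg _
  have hR0 : 0 ≤ R := Real.sqrt_nonneg _
  have hE1 : E ≤ 1 := by nlinarith
  have h1 : s - E * r ≤ ε * R := by linarith
  have h2 : -(ε * R) ≤ s - E * r := by
    nlinarith [mul_nonneg hε0 hR0, mul_nonneg hr0 (sub_nonneg.2 hE1)]
  have hsq : (s - E * r) ^ 2 ≤ (ε * R) ^ 2 := sq_le_sq' h2 h1
  have htR : 0 ≤ t * R := mul_nonneg ht0 hR0
  nlinarith [sq_nonneg (t * R - (E - r * s)), sq_nonneg (t * R + (E - r * s)),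
    mul_nonneg (mul_nonneg hr0 (le_trans hr0 hrs)) htR]

set_option maxHeartbeats 1000000 in
/-- Reverse inclusion of sphere expansion: given pure states `c` and `x` with
trace distance `d(c,x) ≤ r√(1-ε²) + ε√(1-r²)` where
`arcsin r + arcsin ε ≤ π/2`, there exists a pure state `y` with
`d(c,y) ≤ r` and `d(y,x) ≤ ε` (dimension at least 2). -/
theorem sphere_expansion_reverse
    {n : ℕ} (hn : 2 ≤ n) (c x : EuclideanSpace ℂ (Fin n))
    (hc : ‖c‖ = 1) (hx : ‖x‖ = 1)
    (r ε : ℝ) (hr0 : 0 ≤ r) (hr1 : r ≤ 1) (hε0 : 0 ≤ ε) (hε1 : ε ≤ 1)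
    (hangle : Real.arcsin r + Real.arcsin ε ≤ Real.pi / 2)
    (h : traceDist c x ≤ r * Real.sqrt (1 - ε ^ 2) + ε * Real.sqrt (1 - r ^ 2)) :
    ∃ y : EuclideanSpace ℂ (Fin n), ‖y‖ = 1 ∧
      traceDist c y ≤ r ∧ traceDist y x ≤ ε := by
  by_cases hcase : traceDist c x ≤ r
  · refine ⟨x, hx, hcase, ?_⟩
    have hxx : ⟪x, x⟫_ℂ = 1 := by
      rw [inner_self_eq_norm_sq_to_K, hx]; norm_num
    simp [traceDist, hxx, hε0, hx]
  · push_neg at hcase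
    set a : ℂ := ⟪c, x⟫_ℂ with ha
    set t : ℝ := ‖a‖ with htdef
    have ht0 : 0 ≤ t := norm_nonneg _
    have ht1 : t ≤ 1 := by
      calc t ≤ ‖c‖ * ‖x‖ := norm_inner_le_norm c x
      _ = 1 := by rw [hc, hx]; ring
    set s : ℝ := Real.sqrt (1 - t ^ 2) with hsdef
    have hdcx : traceDist c x = s := rfl
    have hs2 : s ^ 2 = 1 - t ^ 2 := Real.sq_sqrt (by nlinarith)
    have hrs : r < s := by rwa [hdcx] at hcase
    have hspos : 0 < s := lt_of_le_of_lt hr0 hrs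
    have hcc : ⟪c, c⟫_ℂ = 1 := by
      rw [inner_self_eq_norm_sq_to_K, hc]; norm_num
    have hxx : ⟪x, x⟫_ℂ = 1 := by
      rw [inner_self_eq_norm_sq_to_K, hx]; norm_num
    set w : EuclideanSpace ℂ (Fin n) := x - a • c with hw
    have hcw : ⟪c, w⟫_ℂ = 0 := by
      rw [hw, inner_sub_right, inner_smul_right, hcc]; ring_nf
      exact sub_eq_zero.2 ha.symm
    have hwc : ⟪w, c⟫_ℂ = 0 := by
      rw [← inner_conj_symm, hcw]; simp
    have haconj : (starRingEnd ℂ) a * a = ((t ^ 2 : ℝ) : ℂ) := by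
      rw [Complex.conj_mul']
      push_cast [htdef]
      norm_cast
    have hwx : ⟪w, x⟫_ℂ = ((1 - t ^ 2 : ℝ) : ℂ) := by
      rw [hw, inner_sub_left, inner_smul_left, hxx, ← ha, haconj]
      push_cast; ring
    have hww : ⟪w, w⟫_ℂ = ((1 - t ^ 2 : ℝ) : ℂ) := by
      rw [hw, inner_sub_right, inner_smul_right, hwx, ← hw, hwc]
      ring
    have hnw : ‖w‖ = s := by
      have h1 : ‖w‖ ^ 2 = RCLike.re ⟪w, w⟫_ℂ := (inner_self_eq_norm_sq (𝕜 := ℂ) w).symm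
      rw [hww] at h1
      have h2 : ‖w‖ ^ 2 = 1 - t ^ 2 := by rw [h1]; norm_cast
      rw [hsdef, ← h2, Real.sqrt_sq (norm_nonneg _)]
    set φ : ℂ := if a = 0 then 1 else (‖a‖ : ℂ)⁻¹ * a with hφ
    have hφn : ‖φ‖ = 1 := by
      rw [hφ]
      split_ifs with h0
      · simp
      · rw [norm_mul, norm_inv, Complex.norm_real, norm_norm]
        exact inv_mul_cancel₀ (norm_ne_zero_iff.2 h0)
    have hφa : (starRingEnd ℂ) φ * a = ((t : ℝ) : ℂ) := by
      rw [hφ]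
      split_ifs with h0
      · simp [h0, htdef]
      · rw [map_mul, map_inv₀, Complex.conj_ofReal, mul_assoc, haconj, htdef]
        push_cast
        rw [inv_mul_eq_div, sq, mul_div_assoc,
          div_self (by exact_mod_cast (norm_ne_zero_iff.2 h0))]
        ring
    have hφφ : (starRingEnd ℂ) φ * φ = 1 := by
      rw [Complex.conj_mul', hφn]
      norm_num
    set R : ℝ := Real.sqrt (1 - r ^ 2) with hRdef
    have hR0 : 0 ≤ R := Real.sqrt_nonneg _
    have hR2 : R ^ 2 = 1 - r ^ 2 := Real.sq_sqrt (by nlinarith)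
    set y : EuclideanSpace ℂ (Fin n) := ((R : ℂ) * φ) • c + ((r / s : ℝ) : ℂ) • w with hy
    have hcy : ⟪c, y⟫_ℂ = (R : ℂ) * φ := by
      rw [hy, inner_add_right, inner_smul_right, inner_smul_right, hcc, hcw]; ring
    have hncy : ‖⟪c, y⟫_ℂ‖ = R := by
      rw [hcy, norm_mul, hφn, Complex.norm_real, Real.norm_eq_abs, abs_of_nonneg hR0]; ring
    have hsne : (s : ℂ) ≠ 0 := by exact_mod_cast hspos.ne'
    have hyx : ⟪y, x⟫_ℂ = ((R * t + r * s : ℝ) : ℂ) := by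
      rw [hy, inner_add_left, inner_smul_left, inner_smul_left, hwx, ← ha]
      rw [map_mul, Complex.conj_ofReal, mul_assoc, hφa, Complex.conj_ofReal]
      have h3 : ((r / s : ℝ) : ℂ) * ((1 - t ^ 2 : ℝ) : ℂ) = ((r * s : ℝ) : ℂ) := by
        rw [← hs2]
        push_cast
        rw [sq]
        field_simp
      rw [h3]
      push_cast; ring
    have hyy : ⟪y, y⟫_ℂ = 1 := by
      rw [hy]
      simp only [inner_add_left, inner_add_right, inner_smul_left, inner_smul_right,
        hcc, hcw, hwc, hww, map_mul, Complex.conj_ofReal, mul_zero, zero_mul, add_zero,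
        zero_add, mul_one]
      have h4 : ((r / s : ℝ) : ℂ) * (((r / s : ℝ) : ℂ) * ((1 - t ^ 2 : ℝ) : ℂ)) =
          ((r ^ 2 : ℝ) : ℂ) := by
        norm_cast
        rw [← hs2]
        field_simp
      rw [h4]
      have h5 : ((R : ℂ)) ^ 2 = 1 - ((r : ℂ)) ^ 2 := by exact_mod_cast hR2
      push_cast
      linear_combination ((R : ℂ)) ^ 2 * hφφ + h5
    have hny : ‖y‖ = 1 := by
      have h1 : ‖y‖ ^ 2 = RCLike.re ⟪y, y⟫_ℂ := (inner_self_eq_norm_sq (𝕜 := ℂ) y).symm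
      rw [hyy] at h1
      rw [RCLike.one_re] at h1
      nlinarith [norm_nonneg y]
    refine ⟨y, hny, ?_, ?_⟩
    · have heq : traceDist c y = Real.sqrt (r ^ 2) := by
        unfold traceDist
        rw [hncy, hR2]; ring_nf
      rw [heq, Real.sqrt_sq hr0]
    · have hkey : Real.sqrt (1 - ε ^ 2) ≤ t * R + r * s :=
        sphere_key r ε s t hr0 hr1 hε0 hε1 ht0 (by linarith) hrs.le (by rwa [hdcx] at h)
      have hE0 : 0 ≤ Real.sqrt (1 - ε ^ 2) := Real.sqrt_nonneg _
      have hE2 : Real.sqrt (1 - ε ^ 2) ^ 2 = 1 - ε ^ 2 := Real.sq_sqrt (by nlinarith)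
      have hnyx : ‖⟪y, x⟫_ℂ‖ = R * t + r * s := by
        rw [hyx, Complex.norm_real, Real.norm_eq_abs, abs_of_nonneg]
        positivity
      have h1 : 1 - ‖⟪y, x⟫_ℂ‖ ^ 2 ≤ ε ^ 2 := by
        rw [hnyx]
        nlinarith
      calc traceDist y x ≤ Real.sqrt (ε ^ 2) := Real.sqrt_le_sqrt h1
        _ = ε := Real.sqrt_sq hε0
end
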